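/- arXiv:2307.15937 — 2 statements merged into one kernel-verified Lean document; each statement's English description precedes it below -/
import Mathlib

section
/- Let M be a countable monoid. There exists a monoid homomorphism φ from M into the multiplicative monoid of continuous linear operators on ℓ₁, with ‖φ(m)‖ ≤ 1 for every m ∈ M, such that for every separable real Banach space E and every monoid homomorphism ψ from M into the multiplicative monoid of continuous linear operators on E with ‖ψ(m)‖ ≤ 1 for every m ∈ M, there exists a surjective continuous linear operator q : ℓ₁ → E with operator norm at most 1 satisfying ψ(m) ∘ q = q ∘ φ(m) for every m ∈ M. -/
open TopologicalSpace

/-- `ℓ₁` : the real Banach space of summable sequences. -/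
noncomputable abbrev ellOne : Type := lp (fun _ : ℕ => ℝ) 1

/-!
The action is the left-regular one: write `ℕ ≃ M × ℕ` and let `m` send the basis vector at
`(a, k)` to the one at `(m * a, k)`. Given a nonexpansive action `ψ` on `E`, choose a sequence
`(u k)` dense in the unit ball of `E`; the operator sending the basis vector at `(a, k)` to
`ψ a (u k)` is nonexpansive and intertwines the two actions, and it is onto because the image of
the unit ball is dense in the unit ball and `ℓ₁` is complete, so that successive approximation
converges.
-/

open Function Metric Set Filter Topology
open scoped lp

section Surjectivity

variable {𝕜 X Y : Type*} [NontriviallyNormedField 𝕜]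
  [NormedAddCommGroup X] [NormedSpace 𝕜 X] [CompleteSpace X]
  [NormedAddCommGroup Y] [NormedSpace 𝕜 Y]

/-- Converse of `ContinuousLinearMap.exists_approx_preimage_norm_le`. -/
theorem ContinuousLinearMap.surjective_of_exists_approx_preimage_norm_le (f : X →L[𝕜] Y)
    (h : ∃ C ≥ 0, ∀ y, ∃ x, dist (f x) y ≤ 1 / 2 * ‖y‖ ∧ ‖x‖ ≤ C * ‖y‖) :
    Surjective f := by
  obtain ⟨C, hC, h⟩ := h
  choose g hg using h
  intro y
  -- `r n` is what is left of `y` after `n` rounds of approximation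
  let r : ℕ → Y := fun n => (fun z => z - f (g z))^[n] y
  have hr_succ : ∀ n, r (n + 1) = r n - f (g (r n)) := fun n => iterate_succ_apply' _ _ _
  have hr_le : ∀ n, ‖r n‖ ≤ (1 / 2) ^ n * ‖y‖ := by
    intro n
    induction n with
    | zero => simp [r]
    | succ n ih =>
      calc ‖r (n + 1)‖ = dist (f (g (r n))) (r n) := by rw [hr_succ, dist_eq_norm']
        _ ≤ 1 / 2 * ‖r n‖ := (hg _).1
        _ ≤ (1 / 2) ^ (n + 1) * ‖y‖ := by rw [pow_succ']; nlinarith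
  have hg_le : ∀ n, ‖g (r n)‖ ≤ C * ‖y‖ * (1 / 2) ^ n := fun n =>
    calc ‖g (r n)‖ ≤ C * ‖r n‖ := (hg _).2
      _ ≤ C * ‖y‖ * (1 / 2) ^ n := by rw [mul_assoc, mul_comm ‖y‖]; gcongr; exact hr_le n
  have hsum : Summable fun n => g (r n) :=
    .of_norm_bounded (summable_geometric_two.mul_left _) hg_le
  have hpartial : ∀ n, ∑ k ∈ Finset.range n, f (g (r k)) = r 0 - r n := fun n => by
    simpa [hr_succ] using Finset.sum_range_sub' r n
  have hr_lim : Tendsto r atTop (𝓝 0) := by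
    refine squeeze_zero_norm hr_le ?_
    simpa using (tendsto_pow_atTop_nhds_zero_of_lt_one (by norm_num : (0 : ℝ) ≤ 1 / 2)
      (by norm_num)).mul_const ‖y‖
  refine ⟨∑' n, g (r n), tendsto_nhds_unique (hsum.hasSum.mapL f).tendsto_sum_nat ?_⟩
  have hr_zero : r 0 = y := rfl
  simpa [hpartial, hr_zero] using tendsto_const_nhds.sub hr_lim

end Surjectivity

theorem ContinuousLinearMap.surjective_of_closedBall_subset_closure_image
    {X Y : Type*} [NormedAddCommGroup X] [NormedSpace ℝ X] [CompleteSpace X]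
    [NormedAddCommGroup Y] [NormedSpace ℝ Y] (f : X →L[ℝ] Y)
    (h : closedBall (0 : Y) 1 ⊆ closure (f '' closedBall 0 1)) : Surjective f := by
  refine f.surjective_of_exists_approx_preimage_norm_le ⟨1, zero_le_one, fun y => ?_⟩
  rcases eq_or_ne y 0 with rfl | hy
  · exact ⟨0, by simp⟩
  have hy' : ‖y‖⁻¹ • y ∈ closedBall (0 : Y) 1 := by
    simp [norm_smul, inv_mul_cancel₀ (norm_ne_zero_iff.2 hy)]
  obtain ⟨_, ⟨x, hx, rfl⟩, hdist⟩ := Metric.mem_closure_iff.1 (h hy') (1 / 2) (by norm_num)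
  refine ⟨‖y‖ • x, ?_, ?_⟩
  · calc dist (f (‖y‖ • x)) y = dist (‖y‖ • f x) (‖y‖ • ‖y‖⁻¹ • y) := by
          rw [map_smul, smul_inv_smul₀ (norm_ne_zero_iff.2 hy)]
      _ = ‖y‖ * dist (‖y‖⁻¹ • y) (f x) := by rw [dist_smul₀, norm_norm, dist_comm]
      _ ≤ 1 / 2 * ‖y‖ := by nlinarith [norm_nonneg y]
  · simpa [norm_smul, mul_comm] using
      mul_le_mul_of_nonneg_left (mem_closedBall_zero_iff.1 hx) (norm_nonneg y)

theorem TopologicalSpace.IsSeparable.exists_seq_dense {X : Type*} [TopologicalSpace X]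
    [PseudoMetrizableSpace X] {s : Set X} (hs : IsSeparable s) (hne : s.Nonempty) :
    ∃ u : ℕ → X, range u ⊆ s ∧ s ⊆ closure (range u) := by
  obtain ⟨t, hts, htc, hst⟩ := hs.exists_countable_dense_subset
  obtain ⟨u, rfl⟩ := htc.exists_eq_range (closure_nonempty_iff.1 (hne.mono hst))
  exact ⟨u, hts, hst⟩

namespace lp

variable {ι : Type*}

theorem hasSum_norm_one {E : ι → Type*} [∀ i, NormedAddCommGroup (E i)] (f : lp E 1) :
    HasSum (fun i => ‖f i‖) ‖f‖ := by
  simpa using lp.hasSum_norm (p := 1) (by norm_num) f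

theorem norm_single_one {p : ENNReal} [Fact (1 ≤ p)] [DecidableEq ι] (i : ι) :
    ‖(lp.single p i 1 : ℓ^p(ι, ℝ))‖ = 1 :=
  (lp.norm_single (zero_lt_one.trans_le Fact.out) i 1).trans norm_one

theorem ext_single [DecidableEq ι] {p : ENNReal} [Fact (1 ≤ p)] (hp : p ≠ ⊤) {F : Type*}
    [NormedAddCommGroup F] [NormedSpace ℝ F] {A B : ℓ^p(ι, ℝ) →L[ℝ] F}
    (h : ∀ i, A (lp.single p i (1 : ℝ)) = B (lp.single p i (1 : ℝ))) : A = B := by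
  ext f
  have hsingle : ∀ i, lp.single p i (f i) = f i • (lp.single p i 1 : ℓ^p(ι, ℝ)) := by
    intro i
    rw [← lp.single_smul, smul_eq_mul, mul_one]
  have hf := lp.hasSum_single hp f
  refine (hf.mapL A).unique ?_
  simpa [hsingle, h] using hf.mapL B

variable {E : Type*} [NormedAddCommGroup E] [NormedSpace ℝ E] [CompleteSpace E]
  {v : ι → E}

theorem summable_smul_of_norm_le_one (hv : ∀ i, ‖v i‖ ≤ 1) (f : ℓ¹(ι, ℝ)) :
    Summable fun i => f i • v i :=
  .of_norm_bounded (hasSum_norm_one f).summable fun i =>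
    (norm_smul _ _).trans_le (mul_le_of_le_one_right (norm_nonneg _) (hv i))

noncomputable def liftOne (v : ι → E) (hv : ∀ i, ‖v i‖ ≤ 1) :
    ℓ¹(ι, ℝ) →L[ℝ] E :=
  LinearMap.mkContinuous
    { toFun f := ∑' i, f i • v i
      map_add' f g := by
        simpa only [coeFn_add, Pi.add_apply, add_smul] using
          (summable_smul_of_norm_le_one hv f).tsum_add (summable_smul_of_norm_le_one hv g)
      map_smul' c f := by
        simpa only [coeFn_smul, Pi.smul_apply, smul_eq_mul, mul_smul, RingHom.id_apply] using
          (summable_smul_of_norm_le_one hv f).tsum_const_smul c }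
    1 fun f => by
      simpa using tsum_of_norm_bounded (hasSum_norm_one f) fun i =>
        (norm_smul _ _).trans_le (mul_le_of_le_one_right (norm_nonneg _) (hv i))

theorem norm_liftOne_le (hv : ∀ i, ‖v i‖ ≤ 1) : ‖liftOne v hv‖ ≤ 1 :=
  LinearMap.mkContinuous_norm_le _ zero_le_one _

@[simp]
theorem liftOne_single [DecidableEq ι] (hv : ∀ i, ‖v i‖ ≤ 1) (i : ι) (c : ℝ) :
    liftOne v hv (lp.single 1 i c : ℓ¹(ι, ℝ)) = c • v i := by
  change ∑' j, (lp.single 1 i c : ℓ¹(ι, ℝ)) j • v j = c • v i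
  rw [tsum_eq_single i fun j hj => by simp [hj]]
  simp

theorem liftOne_surjective (hv : ∀ i, ‖v i‖ ≤ 1)
    (hdense : closedBall 0 1 ⊆ closure (range v)) : Surjective (liftOne v hv) := by
  classical
  refine (liftOne v hv).surjective_of_closedBall_subset_closure_image
    (hdense.trans (closure_mono ?_))
  rintro _ ⟨i, rfl⟩
  exact ⟨lp.single 1 i 1, mem_closedBall_zero_iff.2 (norm_single_one i).le, by simp⟩

section IndexAction

variable (M : Type*) [Monoid M] [MulAction M ι] [DecidableEq ι]

noncomputable def indexAction : M →* (ℓ¹(ι, ℝ) →L[ℝ] ℓ¹(ι, ℝ)) where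
  toFun m := liftOne (fun i => lp.single 1 (m • i) 1) fun i => (norm_single_one (m • i)).le
  map_one' := ext_single ENNReal.one_ne_top fun i => by simp
  map_mul' a b := ext_single ENNReal.one_ne_top fun i => by simp [mul_smul]

theorem norm_indexAction_le (m : M) : ‖indexAction M (ι := ι) m‖ ≤ 1 :=
  norm_liftOne_le fun i => (norm_single_one (m • i)).le

variable {M}

theorem liftOne_indexAction (hv : ∀ i, ‖v i‖ ≤ 1) {m : M} {T : E →L[ℝ] E}
    (h : ∀ i, v (m • i) = T (v i)) (x : ℓ¹(ι, ℝ)) :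
    T (liftOne v hv x) = liftOne v hv (indexAction M m x) := by
  have hcomm : T.comp (liftOne v hv) = (liftOne v hv).comp (indexAction M m) :=
    ext_single ENNReal.one_ne_top fun i => by simp [indexAction, h]
  exact DFunLike.congr_fun hcomm x

end IndexAction

end lp

abbrev Prod.fstMulLeftAction (M κ : Type*) [Monoid M] : MulAction M (M × κ) where
  smul m p := (m * p.1, p.2)
  one_smul p := Prod.ext (one_mul p.1) rfl
  mul_smul a b p := Prod.ext (mul_assoc a b p.1) rfl

/-- For every countable monoid `M` there is a universal nonexpansive `M`-action on `ℓ₁`: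
every nonexpansive `M`-action on a separable real Banach space lifts to it via a surjective
nonexpansive operator. -/
theorem exists_universal_monoid_action (M : Type) [Monoid M] [Countable M] :
    ∃ φ : M →* (ellOne →L[ℝ] ellOne), (∀ m : M, ‖φ m‖ ≤ 1) ∧
      ∀ (E : Type) [NormedAddCommGroup E] [NormedSpace ℝ E] [CompleteSpace E]
        [SeparableSpace E] (ψ : M →* (E →L[ℝ] E)), (∀ m : M, ‖ψ m‖ ≤ 1) →
        ∃ q : ellOne →L[ℝ] E, Function.Surjective q ∧ ‖q‖ ≤ 1 ∧
          ∀ (m : M) (x : ellOne), ψ m (q x) = q (φ m x) := by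
  obtain ⟨e⟩ : Nonempty (ℕ ≃ M × ℕ) := nonempty_equiv_of_countable
  let := Prod.fstMulLeftAction M ℕ
  let : MulAction M ℕ := e.mulAction M
  have he_smul : ∀ (m : M) n, e (m • n) = (m * (e n).1, (e n).2) :=
    fun _ _ => e.apply_symm_apply _
  refine ⟨lp.indexAction M, lp.norm_indexAction_le M, fun E _ _ _ _ ψ hψ => ?_⟩
  obtain ⟨u, hu_ball, hu_dense⟩ := (IsSeparable.of_separableSpace (closedBall (0 : E) 1))
    |>.exists_seq_dense ⟨0, mem_closedBall_self zero_le_one⟩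
  let v : ℕ → E := fun n => ψ (e n).1 (u (e n).2)
  have hv : ∀ n, ‖v n‖ ≤ 1 := fun n => by
    have hu : ‖u (e n).2‖ ≤ 1 := mem_closedBall_zero_iff.1 (hu_ball ⟨_, rfl⟩)
    simpa using (ψ _).le_of_opNorm_le_of_le (hψ _) hu
  have hv_dense : closedBall 0 1 ⊆ closure (range v) :=
    hu_dense.trans (closure_mono (range_subset_iff.2 fun k => ⟨e.symm (1, k), by simp [v]⟩))
  refine ⟨lp.liftOne v hv, lp.liftOne_surjective hv hv_dense, lp.norm_liftOne_le hv,
    fun m => lp.liftOne_indexAction hv fun n => by simp [v, he_smul, map_mul]⟩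
end

section
/- There exists a surjective linear isometry U : ℓ₁ → ℓ₁ such that for every separable real Banach space E and every surjective linear isometry f : E → E, there exists a surjective continuous linear operator q : ℓ₁ → E with operator norm at most 1 satisfying f ∘ q = q ∘ U. -/
open TopologicalSpace

/-!
Reindex `ℓ₁` by `ℕ × ℤ` and let `U` shift coordinates, `(n, k) ↦ (n, k + 1)`: countably many
copies of the bilateral shift. Given `f`, choose a sequence `v` dense in the unit ball of `E` and
send the unit vector at `(n, k)` to `f ^ k (v n)`. This nonexpansive map intertwines `U` and `f` by
construction, and the image of the unit ball is dense in the unit ball of `E`; the successive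
approximation argument from the proof of the open mapping theorem turns this into surjectivity.
-/

open scoped lp
open Metric Set

theorem ContinuousLinearMap.surjective_of_approx_preimage {𝕜 F E : Type*}
    [NontriviallyNormedField 𝕜] [NormedAddCommGroup F] [NormedSpace 𝕜 F] [CompleteSpace F]
    [NormedAddCommGroup E] [NormedSpace 𝕜 E] (T : F →L[𝕜] E) (C : ℝ)
    (h : ∀ y, ∃ x, ‖x‖ ≤ C * ‖y‖ ∧ ‖y - T x‖ ≤ ‖y‖ / 2) : Function.Surjective T := by
  intro y
  choose g hg_norm hg_approx using h
  -- `ys n` is the residual left after `n` correction steps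
  let ys : ℕ → E := fun n => (fun z => z - T (g z))^[n] y
  have ys_succ (n : ℕ) : ys (n + 1) = ys n - T (g (ys n)) :=
    Function.iterate_succ_apply' _ n y
  have ys_le (n : ℕ) : ‖ys n‖ ≤ ‖y‖ * (1 / 2) ^ n := by
    induction n with
    | zero => simp [ys]
    | succ n ih =>
      rw [ys_succ, pow_succ]
      linarith [hg_approx (ys n)]
  have g_ys_le (n : ℕ) : ‖g (ys n)‖ ≤ |C| * ‖y‖ * (1 / 2) ^ n :=
    calc ‖g (ys n)‖ ≤ C * ‖ys n‖ := hg_norm _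
      _ ≤ |C| * ‖ys n‖ := by gcongr; exact le_abs_self C
      _ ≤ |C| * ‖y‖ * (1 / 2) ^ n := by rw [mul_assoc]; gcongr; exact ys_le n
  have hsum : Summable fun n => g (ys n) :=
    .of_norm_bounded (summable_geometric_two.mul_left _) g_ys_le
  have ys_tendsto : Filter.Tendsto ys Filter.atTop (nhds 0) :=
    squeeze_zero_norm ys_le <| by
      simpa using (tendsto_pow_atTop_nhds_zero_of_lt_one (r := (1 / 2 : ℝ)) (by norm_num)
        (by norm_num)).const_mul ‖y‖
  have partial_sum (N : ℕ) : ∑ n ∈ Finset.range N, T (g (ys n)) = y - ys N := by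
    have step (n : ℕ) : T (g (ys n)) = ys n - ys (n + 1) := by rw [ys_succ, sub_sub_cancel]
    simp only [step, Finset.sum_range_sub', ys, Function.iterate_zero_apply]
  refine ⟨∑' n, g (ys n), tendsto_nhds_unique (hsum.hasSum.mapL T).tendsto_sum_nat ?_⟩
  simpa [partial_sum] using tendsto_const_nhds.sub ys_tendsto

theorem hasSum_norm_l1 {ι E : Type*} [NormedAddCommGroup E] (x : ℓ¹(ι, E)) :
    HasSum (fun i => ‖x i‖) ‖x‖ := by
  simpa using lp.hasSum_norm (p := 1) (by norm_num) x

theorem norm_smul_le_of_norm_le_one {𝕜 E : Type*} [NormedField 𝕜] [NormedAddCommGroup E]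
    [NormedSpace 𝕜 E] (c : 𝕜) {y : E} (hy : ‖y‖ ≤ 1) : ‖c • y‖ ≤ ‖c‖ :=
  (norm_smul_le _ _).trans (mul_le_of_le_one_right (norm_nonneg _) hy)

section Reindex

variable {ι κ 𝕜 E : Type*} [NormedField 𝕜] [NormedAddCommGroup E] [NormedSpace 𝕜 E]

variable (𝕜) in
noncomputable def l1Congr (e : ι ≃ κ) : ℓ¹(ι, E) ≃ₗᵢ[𝕜] ℓ¹(κ, E) where
  toFun x := ⟨x ∘ e.symm, memℓp_gen <| by
    simpa [Function.comp_def] using e.symm.summable_iff.2 (hasSum_norm_l1 x).summable⟩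
  invFun y := ⟨y ∘ e, memℓp_gen <| by
    simpa [Function.comp_def] using e.summable_iff.2 (hasSum_norm_l1 y).summable⟩
  map_add' _ _ := rfl
  map_smul' _ _ := rfl
  left_inv x := lp.ext <| funext fun i => by simp
  right_inv y := lp.ext <| funext fun k => by simp
  norm_map' x := (hasSum_norm_l1 _).unique (e.symm.hasSum_iff.2 (hasSum_norm_l1 x))

theorem l1Congr_apply (e : ι ≃ κ) (x : ℓ¹(ι, E)) (k : κ) : l1Congr 𝕜 e x k = x (e.symm k) :=
  rfl

end Reindex

section Synthesis

variable {ι E : Type*} [NormedAddCommGroup E] [NormedSpace ℝ E] [CompleteSpace E]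

theorem summable_smul_of_norm_le_one {w : ι → E} (hw : ∀ i, ‖w i‖ ≤ 1) (x : ℓ¹(ι, ℝ)) :
    Summable fun i => x i • w i :=
  .of_norm_bounded (hasSum_norm_l1 x).summable fun i => norm_smul_le_of_norm_le_one (x i) (hw i)

noncomputable def l1Synthesis (w : ι → E) (hw : ∀ i, ‖w i‖ ≤ 1) : ℓ¹(ι, ℝ) →L[ℝ] E :=
  LinearMap.mkContinuous
    { toFun x := ∑' i, x i • w i
      map_add' x y := by
        simp only [lp.coeFn_add, Pi.add_apply, add_smul]
        exact (summable_smul_of_norm_le_one hw x).tsum_add (summable_smul_of_norm_le_one hw y)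
      map_smul' c x := by
        simp only [lp.coeFn_smul, Pi.smul_apply, smul_assoc, RingHom.id_apply]
        exact (summable_smul_of_norm_le_one hw x).tsum_const_smul c }
    1 fun x => by
      simpa using tsum_of_norm_bounded (hasSum_norm_l1 x)
        fun i => norm_smul_le_of_norm_le_one (x i) (hw i)

variable {w : ι → E} (hw : ∀ i, ‖w i‖ ≤ 1)

theorem l1Synthesis_apply (x : ℓ¹(ι, ℝ)) : l1Synthesis w hw x = ∑' i, x i • w i := rfl

theorem norm_l1Synthesis_le_one : ‖l1Synthesis w hw‖ ≤ 1 :=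
  LinearMap.mkContinuous_norm_le _ zero_le_one _

theorem l1Synthesis_single [DecidableEq ι] (i : ι) :
    l1Synthesis w hw (lp.single 1 i 1) = w i := by
  rw [l1Synthesis_apply, tsum_eq_single i fun j hj => by simp [Pi.single_eq_of_ne hj]]
  simp

theorem l1Synthesis_surjective (hd : sphere (0 : E) 1 ⊆ closure (range w)) :
    Function.Surjective (l1Synthesis w hw) := by
  classical
  refine (l1Synthesis w hw).surjective_of_approx_preimage 1 fun y => ?_
  rcases eq_or_ne y 0 with rfl | hy
  · exact ⟨0, by simp⟩
  have hy' : ‖y‖ ≠ 0 := norm_ne_zero_iff.2 hy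
  obtain ⟨_, ⟨i, rfl⟩, hi⟩ := Metric.mem_closure_iff.1
    (hd (by simp [norm_smul, hy'] : ‖y‖⁻¹ • y ∈ sphere (0 : E) 1)) (1 / 2) (by norm_num)
  refine ⟨‖y‖ • lp.single 1 i 1, by simp [norm_smul, lp.norm_single], ?_⟩
  have : y - l1Synthesis w hw (‖y‖ • lp.single 1 i 1) = ‖y‖ • (‖y‖⁻¹ • y - w i) := by
    rw [map_smul, l1Synthesis_single, smul_sub, smul_inv_smul₀ hy']
  rw [this, norm_smul, norm_norm, ← dist_eq_norm]
  nlinarith [norm_nonneg y]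

theorem l1Synthesis_l1Congr {π : Equiv.Perm ι} {f : E →L[ℝ] E} (hf : ∀ i, f (w i) = w (π i))
    (x : ℓ¹(ι, ℝ)) : f (l1Synthesis w hw x) = l1Synthesis w hw (l1Congr ℝ π x) := by
  rw [l1Synthesis_apply, l1Synthesis_apply, f.map_tsum (summable_smul_of_norm_le_one hw x)]
  simp_rw [l1Congr_apply]
  rw [← π.tsum_eq fun j => x (π.symm j) • w j]
  simp [hf]

end Synthesis

section Orbit

variable {ι E : Type*} [NormedAddCommGroup E] [NormedSpace ℝ E]

def orbitFamily (F : E ≃ₗᵢ[ℝ] E) (v : ι → E) (p : ι × ℤ) : E := (F ^ p.2) (v p.1)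

variable (F : E ≃ₗᵢ[ℝ] E) (v : ι → E)

theorem norm_orbitFamily (p : ι × ℤ) : ‖orbitFamily F v p‖ = ‖v p.1‖ :=
  (F ^ p.2).norm_map _

theorem range_subset_range_orbitFamily : range v ⊆ range (orbitFamily F v) := by
  rintro _ ⟨i, rfl⟩
  exact ⟨(i, 0), rfl⟩

theorem apply_orbitFamily (p : ι × ℤ) :
    F (orbitFamily F v p) = orbitFamily F v (p.1, p.2 + 1) := by
  rw [orbitFamily, orbitFamily, zpow_add_one, (Commute.zpow_self F p.2).eq]
  rfl

end Orbit

theorem exists_seq_closedBall_subset_closure_range (E : Type*) [NormedAddCommGroup E]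
    [SeparableSpace E] :
    ∃ v : ℕ → E, (∀ n, ‖v n‖ ≤ 1) ∧ closedBall (0 : E) 1 ⊆ closure (range v) := by
  have : SecondCountableTopology E := UniformSpace.secondCountable_of_separable E
  have : Nonempty (closedBall (0 : E) 1) := ⟨⟨0, mem_closedBall_self zero_le_one⟩⟩
  obtain ⟨u, hu⟩ := exists_dense_seq (closedBall (0 : E) 1)
  refine ⟨fun n => u n, fun n => mem_closedBall_zero_iff.1 (u n).2, fun z hz => ?_⟩
  rw [range_comp' Subtype.val u]
  exact image_closure_subset_closure_image continuous_subtype_val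
    ⟨⟨z, hz⟩, hu.closure_range ▸ mem_univ _, rfl⟩

/-- There is a surjectively universal surjective linear isometry on `ℓ₁`: every surjective
linear isometry of a separable real Banach space lifts to it via a surjective nonexpansive
operator. -/
theorem exists_universal_linear_isometry :
    ∃ U : ellOne →L[ℝ] ellOne, Function.Surjective U ∧ (∀ x, ‖U x‖ = ‖x‖) ∧
      ∀ (E : Type) [NormedAddCommGroup E] [NormedSpace ℝ E] [CompleteSpace E]
        [SeparableSpace E] (f : E →L[ℝ] E),
        Function.Surjective f → (∀ y, ‖f y‖ = ‖y‖) →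
        ∃ q : ellOne →L[ℝ] E, Function.Surjective q ∧ ‖q‖ ≤ 1 ∧
          ∀ x : ellOne, f (q x) = q (U x) := by
  obtain ⟨σ⟩ : Nonempty (ℕ ≃ ℕ × ℤ) := ⟨(Denumerable.eqv (ℕ × ℤ)).symm⟩
  let π : Equiv.Perm ℕ :=
    σ.symm.permCongr (Equiv.prodCongr (Equiv.refl ℕ) (Equiv.addRight 1))
  let U : ellOne ≃ₗᵢ[ℝ] ellOne := l1Congr ℝ π
  refine ⟨U.toContinuousLinearEquiv, U.surjective, U.norm_map, ?_⟩
  intro E _ _ _ _ f hf_surj hf_norm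
  let F := LinearIsometryEquiv.ofSurjective ⟨f.toLinearMap, hf_norm⟩ hf_surj
  obtain ⟨v, hv_norm, hv_dense⟩ := exists_seq_closedBall_subset_closure_range E
  let w := orbitFamily F v ∘ σ
  have hw (m : ℕ) : ‖w m‖ ≤ 1 := (norm_orbitFamily F v (σ m)).trans_le (hv_norm _)
  have hw_dense : sphere (0 : E) 1 ⊆ closure (range w) := by
    rw [σ.surjective.range_comp]
    exact sphere_subset_closedBall.trans
      (hv_dense.trans (closure_mono (range_subset_range_orbitFamily F v)))
  refine ⟨l1Synthesis w hw, l1Synthesis_surjective hw hw_dense, norm_l1Synthesis_le_one hw,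
    l1Synthesis_l1Congr hw fun m => ?_⟩
  change F (orbitFamily F v (σ m)) = orbitFamily F v (σ (π m))
  rw [apply_orbitFamily]
  simp [π, Prod.map]
end
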